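/- arXiv:1210.6336 — 2 statements merged into one kernel-verified Lean document; each statement's English description precedes it below -/
import Mathlib

section
/- Let X be a nonnegative random variable, p > 1, and set f(t) = P(X > t) for t ≥ 0. Suppose ∫_0^∞ f(t)^{1/p} dt < ∞. For n ≥ 1 let u_n = inf{t : P(X > t) < 1/n}. Then ∑_{n=1}^∞ u_n / n^{1+1/p} < ∞. -/
/-!
Write `f t = P(X > t)` and `q = 1/p`. If `t < u_n` then `f t ≥ 1/n`, so
`u_n n^{-(1+q)} ≤ ∫_0^∞ n^{-(1+q)} 1{1/n ≤ f t} dt`. Summing over `n` and exchanging sum and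
integral, it suffices to bound `∑_{n ≥ 1/c} n^{-(1+q)} ≤ (1 + 1/q) c^q`, which is the integral
test for `x ↦ x^{-(1+q)}`.
-/

open MeasureTheory ProbabilityTheory Set
open scoped ENNReal

lemma ENNReal.natCast_rpow_eq_ofReal {n : ℕ} (hn : n ≠ 0) (s : ℝ) :
    (n : ℝ≥0∞) ^ s = ENNReal.ofReal ((n : ℝ) ^ s) := by
  rw [← ENNReal.ofReal_natCast, ENNReal.ofReal_rpow_of_pos (by positivity)]

lemma tsum_natCast_add_rpow_neg_le {q : ℝ} (hq : 0 < q) {N : ℕ} (hN : N ≠ 0) :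
    ∑' n : ℕ, ((n + N : ℕ) : ℝ) ^ (-(1 + q)) ≤ (1 + q⁻¹) * (N : ℝ) ^ (-q) := by
  have hN1 : (1 : ℝ) ≤ N := by exact_mod_cast Nat.one_le_iff_ne_zero.mpr hN
  have hN0 : (0 : ℝ) < N := by linarith
  have hsum : Summable fun n : ℕ => ((n + N : ℕ) : ℝ) ^ (-(1 + q)) :=
    (summable_nat_add_iff N).mpr (Real.summable_nat_rpow.mpr (by linarith))
  have hanti : AntitoneOn (fun x : ℝ => x ^ (-(1 + q))) (Ici (N : ℝ)) :=
    fun x hx y _ hxy => Real.rpow_le_rpow_of_nonpos (hN0.trans_le hx) hxy (by linarith)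
  have htail := hanti.tsum_comp_add_le_integral N (integrableOn_Ioi_rpow_of_lt (by linarith) hN0)
    fun t ht => Real.rpow_nonneg (hN0.trans ht).le _
  rw [integral_Ioi_rpow_of_lt (by linarith) hN0] at htail
  have hhead : (N : ℝ) ^ (-(1 + q)) ≤ (N : ℝ) ^ (-q) :=
    Real.rpow_le_rpow_of_exponent_le hN1 (by linarith)
  rw [hsum.tsum_eq_zero_add]
  simp only [zero_add, add_right_comm _ 1 N]
  calc _ ≤ (N : ℝ) ^ (-q) + -(N : ℝ) ^ (-(1 + q) + 1) / (-(1 + q) + 1) := add_le_add hhead htail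
    _ = _ := by
      rw [show -(1 + q) + 1 = -q by ring]
      field_simp

lemma tsum_ite_inv_le_rpow_neg_le {q : ℝ} (hq : 0 < q) (c : ℝ≥0∞) :
    ∑' n : ℕ, (if (n : ℝ≥0∞)⁻¹ ≤ c then (n : ℝ≥0∞) ^ (-(1 + q)) else 0) ≤
      ENNReal.ofReal (1 + q⁻¹) * c ^ q := by
  rcases eq_or_ne c ⊤ with rfl | hc_top
  · rw [ENNReal.top_rpow_of_pos hq, ENNReal.mul_top (by simp; positivity)]
    exact le_top
  rcases eq_or_ne c 0 with rfl | hc0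
  · simp
  classical
  have hex : ∃ n : ℕ, (n : ℝ≥0∞)⁻¹ ≤ c := (ENNReal.exists_inv_nat_lt hc0).imp fun _ => le_of_lt
  set N := Nat.find hex
  have hNc : (N : ℝ≥0∞)⁻¹ ≤ c := Nat.find_spec hex
  have hN : N ≠ 0 := fun h => hc_top (by simpa [h] using hNc)
  have hmem : ∀ n : ℕ, (n : ℝ≥0∞)⁻¹ ≤ c ↔ N ≤ n := fun n =>
    ⟨Nat.find_min' hex, fun h => (ENNReal.inv_le_inv.2 (by exact_mod_cast h)).trans hNc⟩
  simp_rw [hmem]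
  rw [← ENNReal.summable.sum_add_tsum_nat_add' (k := N),
    Finset.sum_eq_zero (fun i hi => if_neg (by simpa using hi)), zero_add]
  calc ∑' n : ℕ, (if N ≤ n + N then ((n + N : ℕ) : ℝ≥0∞) ^ (-(1 + q)) else 0)
      = ENNReal.ofReal (∑' n : ℕ, ((n + N : ℕ) : ℝ) ^ (-(1 + q))) := by
        rw [ENNReal.ofReal_tsum_of_nonneg (fun n => by positivity)
          ((summable_nat_add_iff N).mpr (Real.summable_nat_rpow.mpr (by linarith)))]
        congr 1 with n
        rw [if_pos (Nat.le_add_left N n), ENNReal.natCast_rpow_eq_ofReal (by omega)]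
    _ ≤ ENNReal.ofReal ((1 + q⁻¹) * (N : ℝ) ^ (-q)) :=
        ENNReal.ofReal_le_ofReal (tsum_natCast_add_rpow_neg_le hq hN)
    _ = ENNReal.ofReal (1 + q⁻¹) * ((N : ℝ≥0∞)⁻¹) ^ q := by
        rw [ENNReal.ofReal_mul (by positivity), ← ENNReal.natCast_rpow_eq_ofReal hN,
          ENNReal.inv_rpow, ENNReal.rpow_neg]
    _ ≤ ENNReal.ofReal (1 + q⁻¹) * c ^ q := by gcongr

lemma ofReal_div_natCast_rpow_le_lintegral {f : ℝ → ℝ≥0∞} {n : ℕ} (hn : n ≠ 0) {a : ℝ}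
    (s : ℝ) (hf : ∀ t ∈ Ioo 0 a, (n : ℝ≥0∞)⁻¹ ≤ f t) :
    ENNReal.ofReal (a / (n : ℝ) ^ s) ≤
      ∫⁻ t in Ioi 0, if (n : ℝ≥0∞)⁻¹ ≤ f t then (n : ℝ≥0∞) ^ (-s) else 0 :=
  calc ENNReal.ofReal (a / (n : ℝ) ^ s) = ∫⁻ _ in Ioo 0 a, (n : ℝ≥0∞) ^ (-s) := by
        rw [setLIntegral_const, Real.volume_Ioo, sub_zero, div_eq_mul_inv,
          ← Real.rpow_neg (Nat.cast_nonneg n), ENNReal.ofReal_mul' (by positivity),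
          ENNReal.natCast_rpow_eq_ofReal hn, mul_comm]
    _ = ∫⁻ t in Ioo 0 a, if (n : ℝ≥0∞)⁻¹ ≤ f t then (n : ℝ≥0∞) ^ (-s) else 0 :=
        setLIntegral_congr_fun measurableSet_Ioo fun t ht => (if_pos (hf t ht)).symm
    _ ≤ _ := lintegral_mono_set Ioo_subset_Ioi_self

section UpperQuantile

variable {Ω : Type*} [MeasurableSpace Ω] {μ : Measure Ω} {X : Ω → ℝ} {c : ℝ≥0∞}

noncomputable def upperQuantile (μ : Measure Ω) (X : Ω → ℝ) (c : ℝ≥0∞) : ℝ :=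
  sInf {t | μ {ω | t < X ω} < c}

lemma nonneg_of_measure_lt (hX : ∀ ω, 0 ≤ X ω) (hc : c ≤ μ univ) {t : ℝ}
    (ht : μ {ω | t < X ω} < c) : 0 ≤ t := by
  by_contra! h
  have huniv : {ω | t < X ω} = univ := eq_univ_of_forall fun ω => h.trans_le (hX ω)
  exact (ht.trans_le hc).ne (by rw [huniv])

lemma upperQuantile_nonneg (hX : ∀ ω, 0 ≤ X ω) : 0 ≤ upperQuantile μ X c := by
  by_cases hc : c ≤ μ univ
  · exact Real.sInf_nonneg fun _ => nonneg_of_measure_lt hX hc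
  · have huniv : {t | μ {ω | t < X ω} < c} = univ :=
      eq_univ_of_forall fun _ => (measure_mono (subset_univ _)).trans_lt (not_le.mp hc)
    rw [upperQuantile, huniv, Real.sInf_univ]

lemma le_measure_of_lt_upperQuantile (hX : ∀ ω, 0 ≤ X ω) (hc : c ≤ μ univ) {t : ℝ}
    (ht : t < upperQuantile μ X c) : c ≤ μ {ω | t < X ω} := by
  by_contra! h
  exact ht.not_ge (csInf_le ⟨0, fun _ => nonneg_of_measure_lt hX hc⟩ h)

lemma ofReal_upperQuantile_div_rpow_le_lintegral [IsProbabilityMeasure μ] (hX : ∀ ω, 0 ≤ X ω)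
    {s : ℝ} (hs : 0 < s) (n : ℕ) :
    ENNReal.ofReal (upperQuantile μ X (n : ℝ≥0∞)⁻¹ / (n : ℝ) ^ s) ≤
      ∫⁻ t in Ioi 0, if (n : ℝ≥0∞)⁻¹ ≤ μ {ω | t < X ω} then (n : ℝ≥0∞) ^ (-s) else 0 := by
  rcases eq_or_ne n 0 with rfl | hn
  · simp [Real.zero_rpow hs.ne']
  have hinv : (n : ℝ≥0∞)⁻¹ ≤ μ univ := by
    simpa [ENNReal.inv_le_one] using Nat.one_le_iff_ne_zero.mpr hn
  exact ofReal_div_natCast_rpow_le_lintegral hn s fun t ht =>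
    le_measure_of_lt_upperQuantile hX hinv ht.2

theorem summable_upperQuantile_div_rpow [IsProbabilityMeasure μ] (hX : ∀ ω, 0 ≤ X ω)
    {q : ℝ} (hq : 0 < q) (hint : ∫⁻ t in Ioi 0, μ {ω | t < X ω} ^ q < ⊤) :
    Summable fun n : ℕ => upperQuantile μ X (n : ℝ≥0∞)⁻¹ / (n : ℝ) ^ (1 + q) := by
  set f : ℝ → ℝ≥0∞ := fun t => μ {ω | t < X ω}
  have hf : Antitone f := fun s t hst => measure_mono fun ω (h : t < X ω) => hst.trans_lt h
  refine (ENNReal.summable_toReal (LT.lt.ne ?_)).congr fun n =>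
    ENNReal.toReal_ofReal (div_nonneg (upperQuantile_nonneg hX) (by positivity))
  calc ∑' n : ℕ, ENNReal.ofReal (upperQuantile μ X (n : ℝ≥0∞)⁻¹ / (n : ℝ) ^ (1 + q))
      ≤ ∑' n : ℕ, ∫⁻ t in Ioi 0,
          if (n : ℝ≥0∞)⁻¹ ≤ f t then (n : ℝ≥0∞) ^ (-(1 + q)) else 0 :=
        ENNReal.tsum_le_tsum fun n => ofReal_upperQuantile_div_rpow_le_lintegral hX (by positivity) n
    _ = ∫⁻ t in Ioi 0, ∑' n : ℕ,
          if (n : ℝ≥0∞)⁻¹ ≤ f t then (n : ℝ≥0∞) ^ (-(1 + q)) else 0 :=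
        (lintegral_tsum fun _ => (Measurable.ite (measurableSet_le measurable_const hf.measurable)
          measurable_const measurable_const).aemeasurable).symm
    _ ≤ ∫⁻ t in Ioi 0, ENNReal.ofReal (1 + q⁻¹) * f t ^ q :=
        lintegral_mono fun t => tsum_ite_inv_le_rpow_neg_le hq (f t)
    _ = ENNReal.ofReal (1 + q⁻¹) * ∫⁻ t in Ioi 0, f t ^ q :=
        lintegral_const_mul' _ _ ENNReal.ofReal_ne_top
    _ < ⊤ := ENNReal.mul_lt_top ENNReal.ofReal_lt_top hint

end UpperQuantile

theorem stmt_6 {Ω : Type*} [MeasurableSpace Ω] (μ : Measure Ω) [IsProbabilityMeasure μ]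
    (X : Ω → ℝ) (hXnonneg : ∀ ω, 0 ≤ X ω) (p : ℝ) (hp : 1 < p)
    (hint : ∫⁻ t in Set.Ioi (0 : ℝ), (μ {ω | t < X ω}) ^ (1 / p) < ⊤)
    (u : ℕ → ℝ)
    (hu : ∀ n : ℕ, 1 ≤ n →
      u n = sInf {t : ℝ | μ {ω | t < X ω} < (n : ENNReal)⁻¹}) :
    Summable (fun n : ℕ => u n / (n : ℝ) ^ (1 + 1 / p)) := by
  have h := summable_upperQuantile_div_rpow hXnonneg (one_div_pos.mpr (zero_lt_one.trans hp)) hint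
  rw [← summable_nat_add_iff 1] at h ⊢
  exact h.congr fun n => by rw [hu (n + 1) le_add_self]; rfl
end

section
/- Let g : ℝ → [0, ∞] be measurable, even, and satisfy g(x+y) ≤ β(g(x)+g(y)) for a constant β ≥ 1. Let V be a real-valued random variable with g(V) < ∞ almost surely, and let V̂ = V − V′ be its symmetrization. Then E[g(V)] < ∞ if and only if E[g(V̂)] < ∞. -/
/-!
The bound `g(x - y) ≤ β (g x + g y)` (evenness plus quasi-subadditivity) integrates to
`E g(V̂) ≤ 2β E g(V)`. Conversely `g x ≤ β (g(x - y) + g y)`; restricting to the event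
`{g(V') ≤ n}` and using independence gives `E g(V) · P(g(V') ≤ n) ≤ β (E g(V̂) + n)`, and since
`g(V) < ∞` a.s., some level `n` has `P(g(V') ≤ n) = P(g(V) ≤ n) > 0`.
-/

open MeasureTheory ProbabilityTheory
open scoped ENNReal

lemma exists_measure_setOf_le_natCast_ne_zero {α : Type*} [MeasurableSpace α] {μ : Measure α}
    {f : α → ℝ≥0∞} (hμ : μ ≠ 0) (hf : ∀ᵐ a ∂μ, f a < ∞) :
    ∃ n : ℕ, μ {a | f a ≤ n} ≠ 0 := by
  by_contra! h
  have hlarge : ∀ᵐ a ∂μ, ∀ n : ℕ, ¬ f a ≤ n :=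
    ae_all_iff.2 fun n => measure_eq_zero_iff_ae_notMem.1 (h n)
  have hfalse : ∀ᵐ _ ∂μ, False := by
    filter_upwards [hf, hlarge] with a hfa hla
    obtain ⟨n, hn⟩ := ENNReal.exists_nat_gt hfa.ne
    exact hla n hn.le
  exact hμ (ae_eq_bot.1 (Filter.eventually_false_iff_eq_bot.1 hfalse))

section QuasiSubadditive

variable {Ω : Type*} [MeasurableSpace Ω] {μ : Measure Ω} {g : ℝ → ℝ≥0∞} {β : ℝ≥0∞}

lemma lintegral_comp_sub_le (hg : Measurable g) (hgeven : ∀ x, g (-x) = g x)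
    (hgsub : ∀ x y, g (x + y) ≤ β * (g x + g y)) {X Y : Ω → ℝ} (hX : Measurable X)
    (hY : Measurable Y) :
    ∫⁻ ω, g (X ω - Y ω) ∂μ ≤ β * (∫⁻ ω, g (X ω) ∂μ + ∫⁻ ω, g (Y ω) ∂μ) := by
  have hpoint : ∀ ω, g (X ω - Y ω) ≤ β * (g (X ω) + g (Y ω)) := fun ω => by
    simpa only [sub_eq_add_neg, hgeven] using hgsub (X ω) (-Y ω)
  calc ∫⁻ ω, g (X ω - Y ω) ∂μ ≤ ∫⁻ ω, β * (g (X ω) + g (Y ω)) ∂μ := lintegral_mono hpoint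
    _ = β * (∫⁻ ω, g (X ω) ∂μ + ∫⁻ ω, g (Y ω) ∂μ) := by
      rw [lintegral_const_mul _ (by fun_prop),
        lintegral_add_left (by fun_prop : Measurable fun ω => g (X ω))]

lemma lintegral_mul_measure_le_of_indepFun (hg : Measurable g)
    (hgsub : ∀ x y, g (x + y) ≤ β * (g x + g y)) {X Y : Ω → ℝ} (hX : Measurable X)
    (hY : Measurable Y) (hXY : IndepFun X Y μ) (c : ℝ≥0∞) :
    (∫⁻ ω, g (X ω) ∂μ) * μ {ω | g (Y ω) ≤ c} ≤
      β * (∫⁻ ω, g (X ω - Y ω) ∂μ + c * μ Set.univ) := by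
  set φ : ℝ≥0∞ → ℝ≥0∞ := (Set.Iic c).indicator 1
  have hφ : Measurable φ := measurable_one.indicator measurableSet_Iic
  have hmeasure : ∫⁻ ω, φ (g (Y ω)) ∂μ = μ {ω | g (Y ω) ≤ c} :=
    lintegral_indicator_one (measurableSet_le (hg.comp hY) measurable_const)
  have hpoint : ∀ ω, g (X ω) * φ (g (Y ω)) ≤ β * (g (X ω - Y ω) + c) := fun ω => by
    by_cases hω : g (Y ω) ≤ c
    · calc g (X ω) * φ (g (Y ω)) = g (X ω - Y ω + Y ω) := by simp [φ, hω]
        _ ≤ β * (g (X ω - Y ω) + g (Y ω)) := hgsub _ _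
        _ ≤ β * (g (X ω - Y ω) + c) := by gcongr
    · simp [φ, hω]
  calc (∫⁻ ω, g (X ω) ∂μ) * μ {ω | g (Y ω) ≤ c}
      = ∫⁻ ω, g (X ω) * φ (g (Y ω)) ∂μ := by
        rw [← hmeasure]
        exact (lintegral_mul_eq_lintegral_mul_lintegral_of_indepFun (hg.comp hX)
          ((hφ.comp hg).comp hY) (hXY.comp hg (hφ.comp hg))).symm
    _ ≤ ∫⁻ ω, β * (g (X ω - Y ω) + c) ∂μ := lintegral_mono hpoint
    _ = β * (∫⁻ ω, g (X ω - Y ω) ∂μ + c * μ Set.univ) := by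
      rw [lintegral_const_mul _ (by fun_prop),
        lintegral_add_right _ measurable_const, lintegral_const]

end QuasiSubadditive

theorem stmt_14_general {Ω : Type*} [MeasurableSpace Ω] (μ : Measure Ω) [IsProbabilityMeasure μ]
    (g : ℝ → ENNReal) (hgmeas : Measurable g) (hgeven : ∀ x : ℝ, g (-x) = g x)
    (β : ENNReal) (hβtop : β ≠ ⊤)
    (hgsub : ∀ x y : ℝ, g (x + y) ≤ β * (g x + g y))
    (V V' : Ω → ℝ) (hV : Measurable V) (hV' : Measurable V')
    (hindep : IndepFun V V' μ) (hid : IdentDistrib V V' μ μ)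
    (hfin : ∀ᵐ ω ∂μ, g (V ω) < ⊤) :
    (∫⁻ ω, g (V ω) ∂μ) < ⊤ ↔ (∫⁻ ω, g (V ω - V' ω) ∂μ) < ⊤ := by
  have hgV' : ∫⁻ ω, g (V' ω) ∂μ = ∫⁻ ω, g (V ω) ∂μ := (hid.comp hgmeas).lintegral_eq.symm
  constructor
  · intro h
    calc ∫⁻ ω, g (V ω - V' ω) ∂μ ≤ β * (∫⁻ ω, g (V ω) ∂μ + ∫⁻ ω, g (V' ω) ∂μ) :=
          lintegral_comp_sub_le hgmeas hgeven hgsub hV hV'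
      _ < ⊤ := by
        rw [hgV']
        exact ENNReal.mul_lt_top hβtop.lt_top (ENNReal.add_lt_top.2 ⟨h, h⟩)
  · intro h
    obtain ⟨n, hn⟩ := exists_measure_setOf_le_natCast_ne_zero (IsProbabilityMeasure.ne_zero μ) hfin
    have hn' : μ {ω | g (V' ω) ≤ n} ≠ 0 := by
      rwa [← show μ {ω | g (V ω) ≤ n} = μ {ω | g (V' ω) ≤ n} from
        (hid.comp hgmeas).measure_mem_eq measurableSet_Iic]
    refine ENNReal.lt_top_of_mul_ne_top_left (ne_top_of_le_ne_top ?_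
      (lintegral_mul_measure_le_of_indepFun hgmeas hgsub hV hV' hindep n)) hn'
    rw [measure_univ, mul_one]
    exact ENNReal.mul_ne_top hβtop (ENNReal.add_ne_top.2 ⟨h.ne, ENNReal.natCast_ne_top n⟩)

theorem stmt_14 {Ω : Type*} [MeasurableSpace Ω] (μ : Measure Ω) [IsProbabilityMeasure μ]
    (g : ℝ → ENNReal) (hgmeas : Measurable g) (hgeven : ∀ x : ℝ, g (-x) = g x)
    (β : ENNReal) (hβ : 1 ≤ β) (hβtop : β ≠ ⊤)
    (hgsub : ∀ x y : ℝ, g (x + y) ≤ β * (g x + g y))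
    (V V' : Ω → ℝ) (hV : Measurable V) (hV' : Measurable V')
    (hindep : IndepFun V V' μ) (hid : IdentDistrib V V' μ μ)
    (hfin : ∀ᵐ ω ∂μ, g (V ω) < ⊤) :
    (∫⁻ ω, g (V ω) ∂μ) < ⊤ ↔ (∫⁻ ω, g (V ω - V' ω) ∂μ) < ⊤ :=
  stmt_14_general μ g hgmeas hgeven β hβtop hgsub V V' hV hV' hindep hid hfin
end
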